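/- Let H be an R-subset system. Then H(X) ⊆ H^R(X) for every T0 space X, i.e., the Rudin operator R : H ↦ H^R is expansive. -/
import Mathlib


/-- A subset `A` of a topological space is irreducible: it is nonempty and whenever
it is contained in the union of two closed sets, it is contained in one of them. -/
def IsIrred {X : Type*} [TopologicalSpace X] (A : Set X) : Prop :=
  A.Nonempty ∧ ∀ B C : Set X, IsClosed B → IsClosed C → A ⊆ B ∪ C → A ⊆ B ∨ A ⊆ C

/-- A set is saturated if it is the intersection of the open sets containing it. -/
def IsSaturated {X : Type*} [TopologicalSpace X] (S : Set X) : Prop :=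
  S = ⋂₀ {U : Set X | IsOpen U ∧ S ⊆ U}

/-- `KSet X` is the set of nonempty compact saturated subsets of `X`. -/
def KSet (X : Type) [TopologicalSpace X] : Type :=
  {K : Set X // K.Nonempty ∧ IsCompact K ∧ IsSaturated K}

/-- The upper Vietoris topology on `KSet X`, generated by the sets
`□U = {K : K ⊆ U}` for `U` open: this makes `KSet X` the Smyth power space `P_S(X)`. -/
instance upperVietoris {X : Type} [TopologicalSpace X] : TopologicalSpace (KSet X) :=
  TopologicalSpace.generateFrom
    {s : Set (KSet X) | ∃ U : Set X, IsOpen U ∧ s = {K : KSet X | K.1 ⊆ U}}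

/-- The Smyth power space of a space is T0. -/
instance {X : Type} [TopologicalSpace X] : T0Space (KSet X) := by
  refine (t0Space_iff_inseparable (KSet X)).mpr fun K₁ K₂ h => ?_
  have key : ∀ A B : KSet X, Inseparable A B → A.1 ⊆ B.1 := by
    intro A B hAB x hx
    by_contra hxB
    have hsat := B.2.2.2
    rw [hsat] at hxB
    simp only [Set.mem_sInter, Set.mem_setOf_eq, not_forall] at hxB
    obtain ⟨U, ⟨hU, hBU⟩, hxU⟩ := hxB
    have hopen : IsOpen {K : KSet X | K.1 ⊆ U} :=
      TopologicalSpace.GenerateOpen.basic _ ⟨U, hU, rfl⟩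
    have := (hAB.mem_open_iff hopen).mpr (by exact hBU)
    exact hxU (this hx)
  exact Subtype.ext (le_antisymm (key K₁ K₂ h) (key K₂ K₁ h.symm))

/-- An R-subset system: to each T0 space `X` it assigns a family `H(X)` of irreducible
subsets containing all singletons, functorially under images of continuous maps. -/
structure RSystem where
  H : ∀ (X : Type) [TopologicalSpace X] [T0Space X], Set (Set X)
  singleton_mem : ∀ (X : Type) [TopologicalSpace X] [T0Space X] (x : X), {x} ∈ H X
  irred : ∀ (X : Type) [TopologicalSpace X] [T0Space X], ∀ A ∈ H X, IsIrred A
  image_mem : ∀ (X Y : Type) [TopologicalSpace X] [T0Space X]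
    [TopologicalSpace Y] [T0Space Y] (f : X → Y), Continuous f →
    ∀ A ∈ H X, f '' A ∈ H Y

/-- `M(𝒦)`: the closed sets meeting every member of the family `𝒦 ⊆ K(X)`. -/
def Mfam {X : Type} [TopologicalSpace X] (𝒦 : Set (KSet X)) : Set (Set X) :=
  {C : Set X | IsClosed C ∧ ∀ K ∈ 𝒦, (C ∩ K.1).Nonempty}

/-- `H^R(X)`: the subsets `A` of `X` with the H-Rudin property, i.e. such that `cl(A)`
is a minimal closed set meeting every member of some `𝒦 ∈ H(P_S(X))`. -/
def HR (S : RSystem) (X : Type) [TopologicalSpace X] [T0Space X] : Set (Set X) :=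
  {A : Set X | ∃ 𝒦 ∈ S.H (KSet X), closure A ∈ Mfam 𝒦 ∧
    ∀ B ∈ Mfam 𝒦, B ⊆ closure A → B = closure A}

/-- The Rudin operator is expansive: `H(X) ⊆ H^R(X)` for every T0 space `X`. -/
theorem HR_expansive (S : RSystem) :
    ∀ (X : Type) [TopologicalSpace X] [T0Space X], S.H X ⊆ HR S X := by
  intro X _ _ A hA
  -- the saturation of a point: ↑x
  have hKs : ∀ x : X, ({y | ∀ U : Set X, IsOpen U → x ∈ U → y ∈ U} : Set X).Nonempty ∧
      IsCompact {y | ∀ U : Set X, IsOpen U → x ∈ U → y ∈ U} ∧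
      IsSaturated {y | ∀ U : Set X, IsOpen U → x ∈ U → y ∈ U} := by
    intro x
    refine ⟨⟨x, fun U _ hx => hx⟩, ?_, ?_⟩
    · refine isCompact_iff_finite_subcover.mpr ?_
      intro ι U hU hcov
      have hx : x ∈ ⋃ i, U i := hcov (fun V _ hx => hx)
      obtain ⟨i, hi⟩ := Set.mem_iUnion.mp hx
      refine ⟨{i}, ?_⟩
      intro y hy
      simp only [Finset.mem_singleton, Set.iUnion_iUnion_eq_left]
      exact hy (U i) (hU i) hi
    · apply Set.Subset.antisymm
      · intro y hy
        intro V hV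
        simp only [Set.mem_setOf_eq] at hV
        exact hV.2 hy
      · intro z hz
        intro U hU hx
        exact hz U ⟨hU, fun y hy => hy U hU hx⟩
  set e : X → KSet X := fun x => ⟨{y | ∀ U : Set X, IsOpen U → x ∈ U → y ∈ U}, hKs x⟩
    with he
  have hcont : Continuous e := by
    rw [continuous_generateFrom_iff]
    rintro s ⟨U, hU, rfl⟩
    have : e ⁻¹' {K : KSet X | K.1 ⊆ U} = U := by
      ext x
      constructor
      · intro hx
        exact hx (fun V _ h => h)
      · intro hx y hy
        exact hy U hU hx
    rw [this]; exact hU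
  have hK : e '' A ∈ S.H (KSet X) := S.image_mem X (KSet X) e hcont A hA
  refine ⟨e '' A, hK, ?_, ?_⟩
  · refine ⟨isClosed_closure, ?_⟩
    rintro K ⟨x, hxA, rfl⟩
    exact ⟨x, subset_closure hxA, fun U _ hx => hx⟩
  · intro B hB _
    refine Set.Subset.antisymm (by assumption) ?_
    have hAB : A ⊆ B := by
      intro x hx
      obtain ⟨y, hyB, hye⟩ := hB.2 (e x) ⟨x, hx, rfl⟩
      -- y ∈ e x means every open containing x contains y; so x ∈ closure {y} ⊆ B
      by_contra hxB
      have hcl : IsOpen Bᶜ := hB.1.isOpen_compl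
      exact (hye Bᶜ hcl hxB) hyB
    calc closure A ⊆ closure B := closure_mono hAB
      _ = B := hB.1.closure_eq
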